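/- Suppose a finite simple graph G contains a nonskeletal linear homogeneous pair of cliques (A,B). Then G contains three nonempty pairwise disjoint cliques A1, A2, B1 such that: |A1| ≥ |B1|; each of A1, A2, and B1 is either a singleton or a homogeneous clique; A1 ∪ A2 is a clique, A2 ∪ B1 is a clique, and there are no edges between A1 and B1; and (A1 ∪ A2, B1) is a nonskeletal linear homogeneous pair of cliques in G. -/
import Mathlib


open SimpleGraph

namespace Paper

variable {V : Type*} {W : Type*}

/-- A graph is claw-free if no vertex has three pairwise nonadjacent neighbours. -/
def ClawFree (G : SimpleGraph V) : Prop :=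
  ¬ ∃ (v a b c : V), G.Adj v a ∧ G.Adj v b ∧ G.Adj v c ∧
      ¬G.Adj a b ∧ ¬G.Adj a c ∧ ¬G.Adj b c ∧ a ≠ b ∧ a ≠ c ∧ b ≠ c

/-- A graph is quasi-line if every neighbourhood is covered by two cliques. -/
def QuasiLine (G : SimpleGraph V) : Prop :=
  ∀ v : V, ∃ S T : Set V, G.IsClique S ∧ G.IsClique T ∧ G.neighborSet v ⊆ S ∪ T

/-- The clique number ω(G). -/
noncomputable def cliqueNum (G : SimpleGraph V) : ℕ :=
  sSup {n | ∃ s : Finset V, G.IsNClique n s}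

/-- The clique number of the subgraph induced on a vertex set `S`. -/
noncomputable def cliqueNumOn (G : SimpleGraph V) (S : Set V) : ℕ :=
  sSup {n | ∃ s : Finset V, ↑s ⊆ S ∧ G.IsNClique n s}

/-- ω(v): the maximum size of a clique containing `v`. -/
noncomputable def omegaAt (G : SimpleGraph V) (v : V) : ℕ :=
  sSup {n | ∃ s : Finset V, G.IsNClique n s ∧ v ∈ s}

/-- The degree of a vertex (as the cardinality of its neighbourhood). -/
noncomputable def degree' (G : SimpleGraph V) (v : V) : ℕ := (G.neighborSet v).ncard

/-- The maximum degree Δ(G). -/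
noncomputable def maxDeg (G : SimpleGraph V) : ℕ := sSup {n | ∃ v : V, n = degree' G v}

/-- γ_ℓ(v) = ⌈(d(v)+1+ω(v))/2⌉. -/
noncomputable def gammaLocalAt (G : SimpleGraph V) (v : V) : ℕ :=
  (degree' G v + 1 + omegaAt G v + 1) / 2

/-- γ_ℓ(G) = max over vertices of γ_ℓ(v). -/
noncomputable def gammaLocal (G : SimpleGraph V) : ℕ :=
  sSup {n | ∃ v : V, n = gammaLocalAt G v}

/-- The closed neighbourhood of a vertex. -/
def closedNbhd (G : SimpleGraph V) (v : V) : Set V := insert v (G.neighborSet v)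

/-- The closed neighbourhood within an induced subgraph on `S`. -/
def closedNbhdOn (G : SimpleGraph V) (S : Set V) (v : V) : Set V := S ∩ closedNbhd G v

/-- A triad: three pairwise nonadjacent vertices. -/
def IsTriad (G : SimpleGraph V) (T : Finset V) : Prop :=
  T.card = 3 ∧ ∀ u ∈ T, ∀ w ∈ T, u ≠ w → ¬G.Adj u w

/-- A good triad within the induced subgraph on `S`: every vertex of the induced subgraph
outside `T` has two neighbours in `T`, or a twin in `T`, or is trumped by a vertex of `T`. -/
def GoodTriadOn (G : SimpleGraph V) (S : Set V) (T : Finset V) : Prop :=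
  ↑T ⊆ S ∧ IsTriad G T ∧
    ∀ v ∈ S, v ∉ T →
      (∃ t1 ∈ T, ∃ t2 ∈ T, t1 ≠ t2 ∧ G.Adj v t1 ∧ G.Adj v t2) ∨
      (∃ t ∈ T, closedNbhdOn G S v = closedNbhdOn G S t) ∨
      (∃ t ∈ T, closedNbhdOn G S v ⊂ closedNbhdOn G S t)

/-- A good triad in `G`. -/
def GoodTriad (G : SimpleGraph V) (T : Finset V) : Prop := GoodTriadOn G Set.univ T

/-- A homogeneous pair of cliques within the induced subgraph on `S`. -/
def IsHomPairOn (G : SimpleGraph V) (S : Set V) (A B : Finset V) : Prop :=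
  ↑A ⊆ S ∧ ↑B ⊆ S ∧ G.IsClique (↑A : Set V) ∧ G.IsClique (↑B : Set V) ∧
    A.Nonempty ∧ B.Nonempty ∧ Disjoint A B ∧ 3 ≤ A.card + B.card ∧
    ∀ v ∈ S, v ∉ A → v ∉ B →
      ((∀ a ∈ A, G.Adj v a) ∨ (∀ a ∈ A, ¬G.Adj v a)) ∧
      ((∀ b ∈ B, G.Adj v b) ∨ (∀ b ∈ B, ¬G.Adj v b))

/-- A homogeneous pair of cliques in `G`. -/
def IsHomPair (G : SimpleGraph V) (A B : Finset V) : Prop := IsHomPairOn G Set.univ A B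

/-- A homogeneous pair of cliques `(A,B)` is skeletal if deleting any single edge
between `A` and `B` strictly decreases the clique number of `G[A ∪ B]`. -/
def IsSkeletalPair (G : SimpleGraph V) (A B : Finset V) : Prop :=
  ∀ a ∈ A, ∀ b ∈ B, G.Adj a b →
    cliqueNumOn (G.deleteEdges {s(a, b)}) (↑A ∪ ↑B) < cliqueNumOn G (↑A ∪ ↑B)

/-- A graph is skeletal if every homogeneous pair of cliques in it is skeletal. -/
def Skeletal (G : SimpleGraph V) : Prop :=
  ∀ A B : Finset V, IsHomPair G A B → IsSkeletalPair G A B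

/-- A linear pair: no induced C₄ between `A` and `B`. -/
def IsLinearPair (G : SimpleGraph V) (A B : Finset V) : Prop :=
  ¬ ∃ a1 ∈ A, ∃ a2 ∈ A, ∃ b1 ∈ B, ∃ b2 ∈ B,
      G.Adj a1 b1 ∧ G.Adj a2 b2 ∧ ¬G.Adj a1 b2 ∧ ¬G.Adj a2 b1

/-- A homogeneous clique. -/
def IsHomogeneousClique [Fintype V] (G : SimpleGraph V) (C : Finset V) : Prop :=
  G.IsClique (↑C : Set V) ∧ 2 ≤ C.card ∧ C.card ≤ Fintype.card V - 1 ∧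
    ∀ v ∉ C, (∀ c ∈ C, G.Adj v c) ∨ (∀ c ∈ C, ¬G.Adj v c)

/-- `X` straddles the three-cliquing `(A,B,C)` if it meets more than one of `A`, `B`, `C`. -/
def Straddles (A B C : Set V) (X : Finset V) : Prop :=
  ((↑X ∩ A).Nonempty ∧ (↑X ∩ B).Nonempty) ∨
  ((↑X ∩ A).Nonempty ∧ (↑X ∩ C).Nonempty) ∨
  ((↑X ∩ B).Nonempty ∧ (↑X ∩ C).Nonempty)

/-- A three-cliqued graph is weakly skeletal if every nonskeletal homogeneous pair
of cliques is straddling. -/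
def WeaklySkeletal (G : SimpleGraph V) (A B C : Set V) : Prop :=
  ∀ X Y : Finset V, IsHomPair G X Y → ¬IsSkeletalPair G X Y →
    Straddles A B C X ∨ Straddles A B C Y

/-- A set of unordered pairs forming a matching (pairwise disjoint non-loop pairs). -/
def IsMatchingSet (M : Set (Sym2 W)) : Prop :=
  (∀ e ∈ M, ¬e.IsDiag) ∧ ∀ e ∈ M, ∀ e' ∈ M, e ≠ e' → ∀ w : W, w ∈ e → w ∉ e'

/-- `G[D]` is a thickening of `H[R]` under the matching `M`, via the fiber map `f`. -/
structure IsThickeningBetween (H : SimpleGraph W) (M : Set (Sym2 W)) (R : Set W)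
    (G : SimpleGraph V) (D : Set V) (f : V → W) : Prop where
  maps_into : ∀ v ∈ D, f v ∈ R
  fibers_nonempty : ∀ w ∈ R, ∃ v ∈ D, f v = w
  fibers_clique : ∀ w : W, G.IsClique {v | v ∈ D ∧ f v = w}
  adj_of_adj : ∀ u ∈ D, ∀ v ∈ D, f u ≠ f v → H.Adj (f u) (f v) → s(f u, f v) ∉ M → G.Adj u v
  nonadj_of_nonadj : ∀ u ∈ D, ∀ v ∈ D, f u ≠ f v → ¬H.Adj (f u) (f v) → ¬G.Adj u v
  semi_adj : ∀ x ∈ R, ∀ y ∈ R, s(x, y) ∈ M →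
    ∃ u ∈ D, ∃ v ∈ D, f u = x ∧ f v = y ∧ G.Adj u v
  semi_nonadj : ∀ x ∈ R, ∀ y ∈ R, s(x, y) ∈ M →
    ∃ u ∈ D, ∃ v ∈ D, f u = x ∧ f v = y ∧ ¬G.Adj u v

/-- `G` is a thickening of `H[R]` under `M`. -/
def IsThickeningOn (H : SimpleGraph W) (M : Set (Sym2 W)) (R : Set W)
    (G : SimpleGraph V) (f : V → W) : Prop :=
  IsThickeningBetween H M R G Set.univ f

/-- `G` is a thickening of `H` under `M`. -/
def IsThickening (H : SimpleGraph W) (M : Set (Sym2 W)) (G : SimpleGraph V) (f : V → W) : Prop :=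
  IsThickeningBetween H M Set.univ G Set.univ f

/-- A graph is antiprismatic if every vertex outside a triad has exactly two
neighbours in it. -/
def Antiprismatic (H : SimpleGraph W) : Prop :=
  ∀ T : Finset W, IsTriad H T → ∀ v ∉ T,
    ∃ t ∈ T, ¬H.Adj v t ∧ ∀ t' ∈ T, t' ≠ t → H.Adj v t'

/-- A changeable matching in an antiprismatic graph. -/
def ChangeableMatching (H : SimpleGraph W) (M : Set (Sym2 W)) : Prop :=
  M ⊆ H.edgeSet ∧ IsMatchingSet M ∧ ∀ M' ⊆ M, Antiprismatic (H.deleteEdges M')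



/-- The icosahedron `G0` on vertices `v0, …, v11`. -/
def icoG0 : SimpleGraph (Fin 12) :=
  SimpleGraph.fromRel (fun i j =>
    (1 ≤ i.val ∧ i.val ≤ 10 ∧ (j.val = i.val % 10 + 1 ∨ j.val = (i.val + 1) % 10 + 1)) ∨
    (i.val = 0 ∧ j.val % 2 = 1 ∧ 1 ≤ j.val ∧ j.val ≤ 10) ∨
    (i.val = 11 ∧ j.val % 2 = 0 ∧ 1 ≤ j.val ∧ j.val ≤ 10))

/-- `G1 = G0 − v11`. -/
def icoG1 : SimpleGraph (Fin 11) :=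
  SimpleGraph.fromRel (fun i j =>
    (1 ≤ i.val ∧ (j.val = i.val % 10 + 1 ∨ j.val = (i.val + 1) % 10 + 1)) ∨
    (i.val = 0 ∧ j.val % 2 = 1))

/-- `G2 = G1 − v10`. -/
def icoG2 : SimpleGraph (Fin 10) :=
  SimpleGraph.fromRel (fun i j =>
    (1 ≤ i.val ∧ (j.val = i.val % 10 + 1 ∨ j.val = (i.val + 1) % 10 + 1)) ∨
    (i.val = 0 ∧ j.val % 2 = 1))

/-- An icosahedral thickening: a proper thickening of `G0` or `G1`, or a thickening of
`G2 ∪ M` under a matching `M ⊆ {v1v4, v6v9}`. -/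
def IsIcosahedralThickening (G : SimpleGraph V) : Prop :=
  (∃ f : V → Fin 12, IsThickening icoG0 ∅ G f) ∨
  (∃ f : V → Fin 11, IsThickening icoG1 ∅ G f) ∨
  (∃ (M : Set (Sym2 (Fin 10))) (f : V → Fin 10),
      M ⊆ {s((1 : Fin 10), 4), s(6, 9)} ∧
      IsThickening (icoG2 ⊔ SimpleGraph.fromEdgeSet M) M G f)

/-! ### Antihat graphs -/

/-- The vertex type of the antihat base graph: `A = {a0,…,ak}`, `B = {b0,…,bk}`,
`C = {c1,…,ck}` (the third component `i` encodes `c_{i+1}`). -/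
abbrev AHV (k : ℕ) : Type := Fin (k + 1) ⊕ Fin (k + 1) ⊕ Fin k

def ahA {k : ℕ} (i : Fin (k + 1)) : AHV k := Sum.inl i
def ahB {k : ℕ} (i : Fin (k + 1)) : AHV k := Sum.inr (Sum.inl i)
def ahC {k : ℕ} (i : Fin k) : AHV k := Sum.inr (Sum.inr i)

/-- The antihat base graph `H`, where `e00` records whether `a0` and `b0` are adjacent. -/
def antihatH (k : ℕ) (e00 : Bool) : SimpleGraph (AHV k) :=
  SimpleGraph.fromRel (fun x y =>
    match x, y with
    | Sum.inl _, Sum.inl _ => True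
    | Sum.inr (Sum.inl _), Sum.inr (Sum.inl _) => True
    | Sum.inr (Sum.inr _), Sum.inr (Sum.inr _) => True
    | Sum.inl i, Sum.inr (Sum.inl j) =>
        (i = j ∧ 1 ≤ i.val) ∨ (i.val = 0 ∧ j.val = 0 ∧ e00 = true)
    | Sum.inl i, Sum.inr (Sum.inr j) => 1 ≤ i.val ∧ i.val ≠ j.val + 1
    | Sum.inr (Sum.inl i), Sum.inr (Sum.inr j) => 1 ≤ i.val ∧ i.val ≠ j.val + 1
    | _, _ => False)

/-- The conditions on the matching `M` of an antihat thickening with deleted set `Xd`. -/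
def AntihatM (k : ℕ) (e00 : Bool) (Xd : Finset (AHV k)) (M : Set (Sym2 (AHV k))) : Prop :=
  IsMatchingSet M ∧
  (∀ e ∈ M, ∀ w : AHV k, w ∈ e → w ∉ Xd) ∧
  (∀ i j : Fin (k + 1), s(ahA i, ahA j) ∉ M) ∧
  (∀ i j : Fin (k + 1), s(ahB i, ahB j) ∉ M) ∧
  (∀ i j : Fin k, s(ahC i, ahC j) ∉ M) ∧
  (e00 = true → s(ahA (0 : Fin (k + 1)), ahB (0 : Fin (k + 1))) ∈ M) ∧
  (∀ i j : Fin (k + 1), 1 ≤ i.val → 1 ≤ j.val → s(ahA i, ahB j) ∈ M →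
      i = j ∧ ∃ c : Fin k, c.val + 1 = i.val ∧ ahC c ∈ Xd) ∧
  (∀ i : Fin (k + 1), ∀ j : Fin k, 1 ≤ i.val → s(ahB i, ahC j) ∈ M →
      i.val = j.val + 1 ∧ ahA i ∈ Xd) ∧
  (∀ i : Fin (k + 1), ∀ j : Fin k, 1 ≤ i.val → s(ahA i, ahC j) ∈ M →
      i.val = j.val + 1 ∧ ahB i ∈ Xd)

/-! ### Strips and generalized 2-joins -/

/-- The induced subgraph on `S` contains an induced `W5` (a 5-wheel). -/
def HasInducedW5On (G : SimpleGraph V) (S : Set V) : Prop :=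
  ∃ w c0 c1 c2 c3 c4 : V,
    w ∈ S ∧ c0 ∈ S ∧ c1 ∈ S ∧ c2 ∈ S ∧ c3 ∈ S ∧ c4 ∈ S ∧
    G.Adj w c0 ∧ G.Adj w c1 ∧ G.Adj w c2 ∧ G.Adj w c3 ∧ G.Adj w c4 ∧
    G.Adj c0 c1 ∧ G.Adj c1 c2 ∧ G.Adj c2 c3 ∧ G.Adj c3 c4 ∧ G.Adj c4 c0 ∧
    c0 ≠ c2 ∧ c0 ≠ c3 ∧ c1 ≠ c3 ∧ c1 ≠ c4 ∧ c2 ≠ c4 ∧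
    ¬G.Adj c0 c2 ∧ ¬G.Adj c0 c3 ∧ ¬G.Adj c1 c3 ∧ ¬G.Adj c1 c4 ∧ ¬G.Adj c2 c4

/-- A generalized 2-join `((X1,Y1),(X2,Y2))` of `G` separating `V1` from `V2`,
with `X1, X2, Y1, Y2` pairwise disjoint except possibly `X1` and `Y1`. -/
structure IsGen2Join [Fintype V] [DecidableEq V] (G : SimpleGraph V)
    (V1 V2 X1 Y1 X2 Y2 : Finset V) : Prop where
  disjV : Disjoint V1 V2
  unionV : V1 ∪ V2 = Finset.univ
  subX1 : X1 ⊆ V1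
  subY1 : Y1 ⊆ V1
  subX2 : X2 ⊆ V2
  subY2 : Y2 ⊆ V2
  cliqueX : G.IsClique (↑X1 ∪ ↑X2 : Set V)
  cliqueY : G.IsClique (↑Y1 ∪ ↑Y2 : Set V)
  cross : ∀ u ∈ V1, ∀ v ∈ V2, G.Adj u v → (u ∈ X1 ∧ v ∈ X2) ∨ (u ∈ Y1 ∧ v ∈ Y2)
  disjX2Y2 : Disjoint X2 Y2

/-- ω'(v): the maximum size of a clique of `H2 = G[V2 ∪ X1 ∪ Y1]` containing `v`
and not intersecting both `X1 ∖ Y1` and `Y1 ∖ X1`. -/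
noncomputable def omegaJ [DecidableEq V] (G : SimpleGraph V) (V2 X1 Y1 : Finset V) (v : V) : ℕ :=
  sSup {n | ∃ s : Finset V, G.IsNClique n s ∧ v ∈ s ∧ s ⊆ V2 ∪ X1 ∪ Y1 ∧
      ¬((∃ x ∈ s, x ∈ X1 ∧ x ∉ Y1) ∧ ∃ y ∈ s, y ∈ Y1 ∧ y ∉ X1)}

/-- γ_ℓ^j(H2) = max over `v ∈ V2 ∪ X1 ∪ Y1` of ⌈(d_G(v)+1+ω'(v))/2⌉. -/
noncomputable def gammaLJ [DecidableEq V] (G : SimpleGraph V) (V2 X1 Y1 : Finset V) : ℕ :=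
  (V2 ∪ X1 ∪ Y1).sup fun v => (degree' G v + 1 + omegaJ G V2 X1 Y1 v + 1) / 2

/-- `(G[V2], X2, Y2)` is an antihat strip. -/
def IsAntihatStripOn (G : SimpleGraph V) (V2 X2 Y2 : Finset V) : Prop :=
  ∃ (k : ℕ) (e00 : Bool) (Xd : Finset (AHV k)) (M : Set (Sym2 (AHV k))) (f : V → AHV k),
    2 ≤ k ∧ ahA (0 : Fin (k + 1)) ∉ Xd ∧ ahB (0 : Fin (k + 1)) ∉ Xd ∧
    (∃ i j : Fin k, i ≠ j ∧ ahC i ∉ Xd ∧ ahC j ∉ Xd) ∧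
    AntihatM k e00 Xd M ∧
    IsThickeningBetween (antihatH k e00 ⊔ SimpleGraph.fromEdgeSet M) M
      ((↑Xd ∪ {ahA (0 : Fin (k + 1)), ahB (0 : Fin (k + 1))} : Set (AHV k))ᶜ)
      G (↑V2 : Set V) f ∧
    (↑X2 : Set V) = {v | v ∈ V2 ∧ ∃ i : Fin (k + 1), 1 ≤ i.val ∧ f v = ahA i ∧ ahA i ∉ Xd} ∧
    (↑Y2 : Set V) = {v | v ∈ V2 ∧ ∃ i : Fin (k + 1), 1 ≤ i.val ∧ f v = ahB i ∧ ahB i ∉ Xd} ∧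
    HasInducedW5On G (↑V2 : Set V)

/-- The base graph of strange strips, on `a1=0, a2=1, b1=2, b2=3, b3=4, c1=5, c2=6`. -/
def strangeH : SimpleGraph (Fin 7) :=
  SimpleGraph.fromEdgeSet
    {s(0, 1), s(2, 3), s(2, 4), s(3, 4), s(5, 6),
     s(0, 2), s(1, 5), s(3, 5), s(4, 5), s(0, 6), s(1, 6), s(2, 6), s(3, 6)}

/-- The matching `{b3c1, b2c2}` of strange strips. -/
def strangeM : Set (Sym2 (Fin 7)) := {s(4, 5), s(3, 6)}

/-- `(G[V2], X2, Y2)` is a strange strip. -/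
def IsStrangeStripOn (G : SimpleGraph V) (V2 X2 Y2 : Finset V) : Prop :=
  ∃ f : V → Fin 7,
    IsThickeningBetween strangeH strangeM Set.univ G (↑V2 : Set V) f ∧
    (↑X2 : Set V) = {v | v ∈ V2 ∧ (f v = 0 ∨ f v = 1)} ∧
    (↑Y2 : Set V) = {v | v ∈ V2 ∧ (f v = 2 ∨ f v = 3 ∨ f v = 4)}

/-- The base graph of gear strips, on `v1, …, v10` (as `0, …, 9`). -/
def gearH : SimpleGraph (Fin 10) :=
  SimpleGraph.fromEdgeSet
    {s(0, 1), s(1, 2), s(2, 3), s(3, 4), s(4, 5), s(0, 5),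
     s(6, 0), s(6, 1), s(6, 2), s(6, 5),
     s(7, 2), s(7, 3), s(7, 4), s(7, 5), s(7, 6),
     s(8, 0), s(8, 2), s(8, 3), s(8, 5), s(8, 6), s(8, 7),
     s(9, 1), s(9, 2), s(9, 4), s(9, 5), s(9, 6), s(9, 7)}

/-- `(G[V2], X2, Y2)` is a gear strip. -/
def IsGearStripOn (G : SimpleGraph V) (V2 X2 Y2 : Finset V) : Prop :=
  ∃ (Xd : Finset (Fin 10)) (M : Set (Sym2 (Fin 10))) (f : V → Fin 10),
    Xd ⊆ {8, 9} ∧ M ⊆ {s((6 : Fin 10), 7)} ∧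
    IsThickeningBetween gearH M ((↑Xd : Set (Fin 10))ᶜ) G (↑V2 : Set V) f ∧
    (↑X2 : Set V) = {v | v ∈ V2 ∧ (f v = 0 ∨ f v = 1)} ∧
    (↑Y2 : Set V) = {v | v ∈ V2 ∧ (f v = 3 ∨ f v = 4)}

/-! ### The two exceptional three-cliqued classes -/

/-- The base graph of Exception I, on `v1, …, v8` (as `0, …, 7`);
`b` records whether `v2v5` is an edge. -/
def exIG (b : Bool) : SimpleGraph (Fin 8) :=
  SimpleGraph.fromEdgeSet
    ({s(0, 1), s(0, 2), s(0, 5), s(0, 6), s(1, 2), s(1, 3), s(2, 3), s(2, 4), s(3, 4),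
      s(3, 5), s(4, 5), s(5, 6), s(6, 7)} ∪ (if b then {s(1, 4)} else ∅))

/-- The matching of Exception I: `{v1v4, v3v6}`, plus `v2v5` when present. -/
def exIM (b : Bool) : Set (Sym2 (Fin 8)) :=
  {s(0, 3), s(2, 5)} ∪ (if b then {s(1, 4)} else ∅)

/-- The base graph of Exception II, on `v1, …, v9` (as `0, …, 8`); `b24` records
whether `v2v4` is an edge and `b75` whether `v7v5` is an edge. -/
def exIIG (b24 b75 : Bool) : SimpleGraph (Fin 9) :=
  SimpleGraph.fromEdgeSet
    ({s(0, 1), s(6, 7),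
      s(2, 3), s(2, 4), s(2, 5), s(2, 8), s(3, 4), s(3, 5), s(3, 8), s(4, 5), s(4, 8), s(5, 8),
      s(0, 2), s(0, 7), s(0, 8), s(5, 7), s(7, 8), s(1, 2), s(5, 6)}
      ∪ (if b24 then {s(1, 3)} else ∅) ∪ (if b75 then {s(4, 6)} else ∅))

/-! ### Circular interval representations -/

/-- Membership in the (closed) arc from `s` to `t` of the circle `[0,1)`,
going in increasing direction and possibly wrapping around. -/
def ArcMem (s t x : ℝ) : Prop := if s ≤ t then s ≤ x ∧ x ≤ t else (s ≤ x ∨ x ≤ t)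

/-! ### Auxiliary machinery for Statement 18 -/

section Stmt18Aux

variable {V : Type*} [Fintype V] [DecidableEq V]

open scoped Classical in
/-- Neighbours of `v` inside the finset `S`. -/
noncomputable def nbIn (G : SimpleGraph V) (S : Finset V) (v : V) : Finset V :=
  S.filter fun u => G.Adj v u

lemma mem_nbIn {G : SimpleGraph V} {S : Finset V} {v u : V} :
    u ∈ nbIn G S v ↔ u ∈ S ∧ G.Adj v u := by
  classical simp [nbIn]

open scoped Classical in
/-- The class of `b0` inside `B`: vertices of `B` with the same neighbourhood in `A`. -/
noncomputable def cls (G : SimpleGraph V) (A B : Finset V) (b0 : V) : Finset V :=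
  B.filter fun b => nbIn G A b = nbIn G A b0

open scoped Classical in
/-- The elements of `A \ N(b0)` with maximal neighbourhood in `B`. -/
noncomputable def topCl (G : SimpleGraph V) (A B : Finset V) (b0 : V) : Finset V :=
  (A \ nbIn G A b0).filter fun a => ∀ a' ∈ A \ nbIn G A b0, nbIn G B a' ⊆ nbIn G B a

open scoped Classical in
/-- The elements of `N(b0)` with minimal neighbourhood in `B`. -/
noncomputable def botCl (G : SimpleGraph V) (A B : Finset V) (b0 : V) : Finset V :=
  (nbIn G A b0).filter fun a => ∀ a' ∈ nbIn G A b0, nbIn G B a ⊆ nbIn G B a'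

lemma mem_cls {G : SimpleGraph V} {A B : Finset V} {b0 b : V} :
    b ∈ cls G A B b0 ↔ b ∈ B ∧ nbIn G A b = nbIn G A b0 := by
  classical simp only [cls, Finset.mem_filter]

lemma mem_topCl {G : SimpleGraph V} {A B : Finset V} {b0 a : V} :
    a ∈ topCl G A B b0 ↔ a ∈ A \ nbIn G A b0 ∧
      ∀ a' ∈ A \ nbIn G A b0, nbIn G B a' ⊆ nbIn G B a := by
  classical simp only [topCl, Finset.mem_filter]

lemma mem_botCl {G : SimpleGraph V} {A B : Finset V} {b0 a : V} :
    a ∈ botCl G A B b0 ↔ a ∈ nbIn G A b0 ∧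
      ∀ a' ∈ nbIn G A b0, nbIn G B a ⊆ nbIn G B a' := by
  classical simp only [botCl, Finset.mem_filter]

lemma cliqueNumOn_le {G : SimpleGraph V} {S : Set V} {m : ℕ}
    (h : ∀ t : Finset V, ↑t ⊆ S → G.IsClique (↑t : Set V) → t.card ≤ m) :
    cliqueNumOn G S ≤ m := by
  apply csSup_le'
  rintro n ⟨t, ht, hc⟩
  have h2 := h t ht hc.1
  rw [hc.2] at h2
  exact h2

lemma le_cliqueNumOn {G : SimpleGraph V} {S : Set V} (t : Finset V)
    (ht : ↑t ⊆ S) (hc : G.IsClique (↑t : Set V)) : t.card ≤ cliqueNumOn G S := by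
  apply le_csSup
  · refine ⟨Fintype.card V, ?_⟩
    rintro n ⟨s, _, hcs⟩
    rw [← hcs.2]
    exact Finset.card_le_univ s
  · exact ⟨t, ht, hc, rfl⟩

lemma homPair_symm {G : SimpleGraph V} {A B : Finset V} (h : IsHomPair G A B) :
    IsHomPair G B A := by
  obtain ⟨h1, h2, h3, h4, h5, h6, h7, h8, h9⟩ := h
  refine ⟨h2, h1, h4, h3, h6, h5, h7.symm, by omega, fun v hv hvB hvA => ?_⟩
  exact ⟨(h9 v hv hvA hvB).2, (h9 v hv hvA hvB).1⟩

lemma linear_symm {G : SimpleGraph V} {A B : Finset V} (h : IsLinearPair G A B) :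
    IsLinearPair G B A := by
  rintro ⟨b1, hb1, b2, hb2, a1, ha1, a2, ha2, h11, h22, h12, h21⟩
  exact h ⟨a1, ha1, a2, ha2, b1, hb1, b2, hb2, h11.symm, h22.symm,
    fun hadj => h21 hadj.symm, fun hadj => h12 hadj.symm⟩

/-- From linearity: the neighbourhoods in `A` of vertices of `B` form a chain. -/
lemma chain_of_linear {G : SimpleGraph V} {A B : Finset V} (hlin : IsLinearPair G A B) :
    ∀ b ∈ B, ∀ b' ∈ B, nbIn G A b ⊆ nbIn G A b' ∨ nbIn G A b' ⊆ nbIn G A b := by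
  intro b hb b' hb'
  by_contra h
  push_neg at h
  obtain ⟨a1, ha1, ha1'⟩ := Finset.not_subset.mp h.1
  obtain ⟨a2, ha2, ha2'⟩ := Finset.not_subset.mp h.2
  rw [mem_nbIn] at ha1 ha2
  exact hlin ⟨a1, ha1.1, a2, ha2.1, b, hb, b', hb', ha1.2.symm, ha2.2.symm,
    fun hadj => ha1' (mem_nbIn.mpr ⟨ha1.1, hadj.symm⟩),
    fun hadj => ha2' (mem_nbIn.mpr ⟨ha2.1, hadj.symm⟩)⟩

lemma exists_top {S : Finset V} (f : V → Finset V) (hS : S.Nonempty)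
    (hch : ∀ a ∈ S, ∀ a' ∈ S, f a ⊆ f a' ∨ f a' ⊆ f a) :
    ∃ a ∈ S, ∀ a' ∈ S, f a' ⊆ f a := by
  obtain ⟨a, ha, hmax⟩ := S.exists_max_image (fun x => (f x).card) hS
  refine ⟨a, ha, fun a' ha' => ?_⟩
  rcases hch a' ha' a ha with h | h
  · exact h
  · have he := Finset.eq_of_subset_of_card_le h (hmax a' ha')
    rw [he]

lemma exists_bot {S : Finset V} (f : V → Finset V) (hS : S.Nonempty)
    (hch : ∀ a ∈ S, ∀ a' ∈ S, f a ⊆ f a' ∨ f a' ⊆ f a) :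
    ∃ a ∈ S, ∀ a' ∈ S, f a ⊆ f a' := by
  obtain ⟨a, ha, hmin⟩ := S.exists_min_image (fun x => (f x).card) hS
  refine ⟨a, ha, fun a' ha' => ?_⟩
  rcases hch a ha a' ha' with h | h
  · exact h
  · have he := Finset.eq_of_subset_of_card_le h (hmin a' ha')
    rw [← he]

/-- Subsets of `A` (in a homogeneous pair `(A,B)`) with constant neighbourhood in `B`
are homogeneous cliques as soon as they have at least two elements. -/
lemma homClique_of_const {G : SimpleGraph V} {A B : Finset V} (hpair : IsHomPair G A B)
    (C : Finset V) (hCA : C ⊆ A)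
    (hconst : ∀ c ∈ C, ∀ c' ∈ C, nbIn G B c = nbIn G B c')
    (hC2 : 2 ≤ C.card) : IsHomogeneousClique G C := by
  obtain ⟨-, -, hcliqA, hcliqB, hAne, hBne, hdisj, -, hhom⟩ := hpair
  obtain ⟨c0, hc0⟩ : C.Nonempty := Finset.card_pos.mp (by omega)
  refine ⟨hcliqA.subset (by exact_mod_cast Finset.coe_subset.mpr hCA), hC2, ?_, ?_⟩
  · obtain ⟨b, hb⟩ := hBne
    have hbC : b ∉ C := fun hbC => (Finset.disjoint_left.mp hdisj (hCA hbC)) hb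
    have hsub : C ⊆ Finset.univ.erase b :=
      fun x hx => Finset.mem_erase.mpr ⟨fun hxb => hbC (hxb ▸ hx), Finset.mem_univ x⟩
    have := Finset.card_le_card hsub
    rwa [Finset.card_erase_of_mem (Finset.mem_univ b), Finset.card_univ] at this
  · intro v hv
    by_cases hvA : v ∈ A
    · exact Or.inl fun c hc => hcliqA (by exact_mod_cast hvA)
        (by exact_mod_cast hCA hc) (fun he => hv (he ▸ hc))
    by_cases hvB : v ∈ B
    · by_cases hadj : G.Adj c0 v
      · refine Or.inl fun c hc => ?_
        have : v ∈ nbIn G B c := by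
          rw [hconst c hc c0 hc0]
          exact mem_nbIn.mpr ⟨hvB, hadj⟩
        exact (mem_nbIn.mp this).2.symm
      · refine Or.inr fun c hc hadj' => ?_
        have : v ∈ nbIn G B c0 := by
          rw [← hconst c hc c0 hc0]
          exact mem_nbIn.mpr ⟨hvB, hadj'.symm⟩
        exact hadj (mem_nbIn.mp this).2
    · rcases (hhom v (Set.mem_univ v) hvA hvB).1 with h | h
      · exact Or.inl fun c hc => h c (hCA hc)
      · exact Or.inr fun c hc => h c (hCA hc)

set_option maxHeartbeats 1000000 in
open scoped Classical in
/-- The main construction: from a class `B1` of `b0` in `B`, the bottom class `A2`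
inside `N(b0)` and the top class `A1` outside it. -/
lemma stmt18_construct (G : SimpleGraph V) (A B : Finset V)
    (hpair : IsHomPair G A B) (hlin : IsLinearPair G A B)
    (b0 : V) (hb0 : b0 ∈ B) (hNne : (nbIn G A b0).Nonempty)
    (hA1ne' : (A \ nbIn G A b0).Nonempty)
    (hcard : (cls G A B b0).card ≤ (topCl G A B b0).card) :
    ∃ A1 A2 B1 : Finset V, A1.Nonempty ∧ A2.Nonempty ∧ B1.Nonempty ∧
      Disjoint A1 A2 ∧ Disjoint A1 B1 ∧ Disjoint A2 B1 ∧
      B1.card ≤ A1.card ∧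
      (A1.card = 1 ∨ IsHomogeneousClique G A1) ∧
      (A2.card = 1 ∨ IsHomogeneousClique G A2) ∧
      (B1.card = 1 ∨ IsHomogeneousClique G B1) ∧
      G.IsClique (↑A1 ∪ ↑A2 : Set V) ∧ G.IsClique (↑A2 ∪ ↑B1 : Set V) ∧
      (∀ a ∈ A1, ∀ b ∈ B1, ¬G.Adj a b) ∧
      IsHomPair G (A1 ∪ A2) B1 ∧
      IsLinearPair G (A1 ∪ A2) B1 ∧
      ¬IsSkeletalPair G (A1 ∪ A2) B1 := by
  obtain ⟨-, -, hcliqA, hcliqB, hAne, hBne, hdisj, -, hhom⟩ := id hpair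
  set N := nbIn G A b0 with hNdef
  set A1 := topCl G A B b0 with hA1def
  set A2 := botCl G A B b0 with hA2def
  set B1 := cls G A B b0 with hB1def
  have hNA : N ⊆ A := fun x hx => (mem_nbIn.mp hx).1
  have hchB : ∀ b ∈ B, ∀ b' ∈ B, nbIn G A b ⊆ nbIn G A b' ∨ nbIn G A b' ⊆ nbIn G A b :=
    chain_of_linear hlin
  have hchA : ∀ a ∈ A, ∀ a' ∈ A, nbIn G B a ⊆ nbIn G B a' ∨ nbIn G B a' ⊆ nbIn G B a :=
    chain_of_linear (linear_symm hlin)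
  -- memberships
  have hA1A : ∀ a ∈ A1, a ∈ A ∧ a ∉ N := fun a ha =>
    Finset.mem_sdiff.mp (mem_topCl.mp ha).1
  have hA2N : ∀ a ∈ A2, a ∈ N := fun a ha => (mem_botCl.mp ha).1
  have hA2A : ∀ a ∈ A2, a ∈ A := fun a ha => hNA (hA2N a ha)
  have hB1B : ∀ b ∈ B1, b ∈ B := fun b hb => (mem_cls.mp hb).1
  have hB1N : ∀ b ∈ B1, nbIn G A b = N := fun b hb => (mem_cls.mp hb).2
  -- nonemptiness
  have hA1 : A1.Nonempty := by
    obtain ⟨a, ha, hm⟩ := exists_top (nbIn G B) hA1ne'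
      (fun x hx y hy => hchA x (Finset.mem_sdiff.mp hx).1 y (Finset.mem_sdiff.mp hy).1)
    exact ⟨a, mem_topCl.mpr ⟨ha, hm⟩⟩
  have hA2 : A2.Nonempty := by
    obtain ⟨a, ha, hm⟩ := exists_bot (nbIn G B) hNne
      (fun x hx y hy => hchA x (hNA hx) y (hNA hy))
    exact ⟨a, mem_botCl.mpr ⟨ha, hm⟩⟩
  have hB1 : B1.Nonempty := ⟨b0, mem_cls.mpr ⟨hb0, rfl⟩⟩
  -- disjointness
  have hd12 : Disjoint A1 A2 := Finset.disjoint_left.mpr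
    (fun {x} hx hx2 => (hA1A x hx).2 (hA2N x hx2))
  have hd1B : Disjoint A1 B1 := Finset.disjoint_left.mpr
    (fun {x} hx hx2 => Finset.disjoint_left.mp hdisj (hA1A x hx).1 (hB1B x hx2))
  have hd2B : Disjoint A2 B1 := Finset.disjoint_left.mpr
    (fun {x} hx hx2 => Finset.disjoint_left.mp hdisj (hA2A x hx) (hB1B x hx2))
  -- constant neighbourhoods
  have hA1const : ∀ a ∈ A1, ∀ a' ∈ A1, nbIn G B a = nbIn G B a' := by
    intro a ha a' ha'
    exact Finset.Subset.antisymm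
      ((mem_topCl.mp ha').2 a (Finset.mem_sdiff.mpr (hA1A a ha)))
      ((mem_topCl.mp ha).2 a' (Finset.mem_sdiff.mpr (hA1A a' ha')))
  have hA2const : ∀ a ∈ A2, ∀ a' ∈ A2, nbIn G B a = nbIn G B a' := by
    intro a ha a' ha'
    exact Finset.Subset.antisymm
      ((mem_botCl.mp ha).2 a' (hA2N a' ha'))
      ((mem_botCl.mp ha').2 a (hA2N a ha))
  have hB1const : ∀ b ∈ B1, ∀ b' ∈ B1, nbIn G A b = nbIn G A b' := by
    intro b hb b' hb'
    rw [hB1N b hb, hB1N b' hb']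
  -- adjacency structure
  have hanti : ∀ a ∈ A1, ∀ b ∈ B1, ¬G.Adj a b := by
    intro a ha b hb hadj
    exact (hA1A a ha).2 (hB1N b hb ▸ mem_nbIn.mpr ⟨(hA1A a ha).1, hadj.symm⟩)
  have hcompl : ∀ a ∈ A2, ∀ b ∈ B1, G.Adj a b := by
    intro a ha b hb
    have : a ∈ nbIn G A b := (hB1N b hb).symm ▸ hA2N a ha
    exact (mem_nbIn.mp this).2.symm
  -- cliques
  have hA12A : ↑(A1 ∪ A2) ⊆ (↑A : Set V) := by
    intro x hx
    simp only [Finset.coe_union, Set.mem_union, Finset.mem_coe] at hx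
    rcases hx with h | h
    · exact (hA1A x h).1
    · exact hA2A x h
  have hcliq12 : G.IsClique (↑A1 ∪ ↑A2 : Set V) := by
    have := hcliqA.subset hA12A
    rwa [Finset.coe_union] at this
  have hcliq2B : G.IsClique (↑A2 ∪ ↑B1 : Set V) := by
    intro x hx y hy hxy
    rcases hx with hx | hx <;> rcases hy with hy | hy
    · exact hcliqA (by exact_mod_cast hA2A x hx) (by exact_mod_cast hA2A y hy) hxy
    · exact hcompl x hx y hy
    · exact (hcompl y hy x hx).symm
    · exact hcliqB (by exact_mod_cast hB1B x hx) (by exact_mod_cast hB1B y hy) hxy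
  have hcliqB1 : G.IsClique (↑B1 : Set V) :=
    hcliqB.subset (by exact_mod_cast Finset.coe_subset.mpr (fun b hb => hB1B b hb))
  -- uniformity of outside vertices on S = A1 ∪ A2 and on B1
  have huniform : ∀ v : V, v ∉ A1 ∪ A2 → v ∉ B1 →
      ((∀ a ∈ A1 ∪ A2, G.Adj v a) ∨ (∀ a ∈ A1 ∪ A2, ¬G.Adj v a)) ∧
      ((∀ b ∈ B1, G.Adj v b) ∨ (∀ b ∈ B1, ¬G.Adj v b)) := by
    intro v hvS hvB1
    by_cases hvA : v ∈ A
    · constructor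
      · refine Or.inl fun a ha => ?_
        have haA : a ∈ A := hA12A (by exact_mod_cast ha)
        exact hcliqA (by exact_mod_cast hvA) (by exact_mod_cast haA)
          (fun he => hvS (he ▸ ha))
      · by_cases hvN : v ∈ N
        · refine Or.inl fun b hb => ?_
          have : v ∈ nbIn G A b := (hB1N b hb).symm ▸ hvN
          exact (mem_nbIn.mp this).2.symm
        · refine Or.inr fun b hb hadj => ?_
          exact hvN (hB1N b hb ▸ mem_nbIn.mpr ⟨hvA, hadj.symm⟩)
    by_cases hvB : v ∈ B
    · constructor
      · -- uniform on A1 ∪ A2 via the chain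
        have hvne : nbIn G A v ≠ N := fun he => hvB1 (mem_cls.mpr ⟨hvB, he⟩)
        rcases hchB v hvB b0 hb0 with hsub | hsup
        · -- nbIn v ⊊ N : nonadjacent to everything in A1 ∪ A2
          refine Or.inr fun a ha hadj => ?_
          have haA : a ∈ A := hA12A (by exact_mod_cast ha)
          have hamem : a ∈ nbIn G A v := mem_nbIn.mpr ⟨haA, hadj⟩
          rcases Finset.mem_union.mp ha with h1 | h2
          · exact (hA1A a h1).2 (hsub hamem)
          · -- a ∈ A2 : use minimality
            obtain ⟨a'', ha''N, ha''nv⟩ :=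
              Finset.exists_of_ssubset (ssubset_of_subset_of_ne hsub hvne)
            have hv1 : v ∈ nbIn G B a := mem_nbIn.mpr ⟨hvB, hadj.symm⟩
            have hv2 : v ∈ nbIn G B a'' := (mem_botCl.mp h2).2 a'' ha''N hv1
            exact ha''nv (mem_nbIn.mpr ⟨hNA ha''N, (mem_nbIn.mp hv2).2.symm⟩)
        · -- N ⊊ nbIn v : adjacent to everything in A1 ∪ A2
          refine Or.inl fun a ha => ?_
          rcases Finset.mem_union.mp ha with h1 | h2
          · obtain ⟨a1, ha1v, ha1N⟩ :=
              Finset.exists_of_ssubset (ssubset_of_subset_of_ne hsup (fun he => hvne he.symm))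
            have ha1A : a1 ∈ A := (mem_nbIn.mp ha1v).1
            have hv1 : v ∈ nbIn G B a1 := mem_nbIn.mpr ⟨hvB, (mem_nbIn.mp ha1v).2.symm⟩
            have hv2 : v ∈ nbIn G B a :=
              (mem_topCl.mp h1).2 a1 (Finset.mem_sdiff.mpr ⟨ha1A, ha1N⟩) hv1
            exact (mem_nbIn.mp hv2).2.symm
          · have : a ∈ nbIn G A v := hsup (hA2N a h2)
            exact (mem_nbIn.mp this).2
      · refine Or.inl fun b hb => ?_
        exact hcliqB (by exact_mod_cast hvB) (by exact_mod_cast hB1B b hb)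
          (fun he => hvB1 (he ▸ hb))
    · -- v outside A ∪ B
      obtain ⟨hA', hB'⟩ := hhom v (Set.mem_univ v) hvA hvB
      constructor
      · rcases hA' with h | h
        · exact Or.inl fun a ha => h a (hA12A (by exact_mod_cast ha))
        · exact Or.inr fun a ha => h a (hA12A (by exact_mod_cast ha))
      · rcases hB' with h | h
        · exact Or.inl fun b hb => h b (hB1B b hb)
        · exact Or.inr fun b hb => h b (hB1B b hb)
  -- cardinalities
  have hA1pos : 1 ≤ A1.card := Finset.card_pos.mpr hA1
  have hA2pos : 1 ≤ A2.card := Finset.card_pos.mpr hA2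
  have hB1pos : 1 ≤ B1.card := Finset.card_pos.mpr hB1
  have hcardU : (A1 ∪ A2).card = A1.card + A2.card := Finset.card_union_of_disjoint hd12
  refine ⟨A1, A2, B1, hA1, hA2, hB1, hd12, hd1B, hd2B, hcard, ?_, ?_, ?_,
    hcliq12, hcliq2B, hanti, ?_, ?_, ?_⟩
  · -- A1 singleton or homogeneous clique
    rcases Nat.lt_or_ge A1.card 2 with h | h
    · exact Or.inl (by omega)
    · exact Or.inr (homClique_of_const hpair A1 (fun a ha => (hA1A a ha).1) hA1const h)
  · rcases Nat.lt_or_ge A2.card 2 with h | h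
    · exact Or.inl (by omega)
    · exact Or.inr (homClique_of_const hpair A2 hA2A hA2const h)
  · rcases Nat.lt_or_ge B1.card 2 with h | h
    · exact Or.inl (by omega)
    · exact Or.inr (homClique_of_const (homPair_symm hpair) B1 hB1B hB1const h)
  · -- IsHomPair G (A1 ∪ A2) B1
    refine ⟨Set.subset_univ _, Set.subset_univ _, ?_, hcliqB1,
      ⟨hA1.choose, Finset.mem_union_left _ hA1.choose_spec⟩, hB1,
      Finset.disjoint_union_left.mpr ⟨hd1B, hd2B⟩, by omega,
      fun v _ hvS hvB1 => huniform v hvS hvB1⟩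
    rw [Finset.coe_union]
    exact hcliq12
  · -- linearity
    rintro ⟨a1, ha1, a2, ha2, b1, hb1, b2, hb2, h11, h22, h12, h21⟩
    have ha1A : a1 ∈ A := hA12A (by exact_mod_cast ha1)
    have : a1 ∈ nbIn G A b2 := by
      rw [hB1N b2 hb2, ← hB1N b1 hb1]
      exact mem_nbIn.mpr ⟨ha1A, h11.symm⟩
    exact h12 (mem_nbIn.mp this).2.symm
  · -- not skeletal
    intro hsk
    obtain ⟨a2, ha2⟩ := hA2
    have hadj : G.Adj a2 b0 := hcompl a2 ha2 b0 (mem_cls.mpr ⟨hb0, rfl⟩)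
    have h := hsk a2 (Finset.mem_union_right _ ha2) b0 (mem_cls.mpr ⟨hb0, rfl⟩) hadj
    have hb0A : b0 ∉ A := Finset.disjoint_left.mp hdisj.symm hb0
    -- upper bound on the original clique number
    have hup : cliqueNumOn G (↑(A1 ∪ A2) ∪ ↑B1) ≤ A1.card + A2.card := by
      apply cliqueNumOn_le
      intro t ht hcliqt
      by_cases hint : ∃ b ∈ t, b ∈ B1
      · obtain ⟨b, hbt, hbB1⟩ := hint
        have hsub : t ⊆ A2 ∪ B1 := by
          intro x hx
          have hxU := ht (by exact_mod_cast hx)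
          rcases hxU with hxS | hxB
          · rcases Finset.mem_union.mp (by exact_mod_cast hxS) with h1 | h2
            · exfalso
              have hxb : x ≠ b := fun he =>
                Finset.disjoint_left.mp hd1B h1 (he ▸ hbB1)
              exact hanti x h1 b hbB1
                (hcliqt (by exact_mod_cast hx) (by exact_mod_cast hbt) hxb)
            · exact Finset.mem_union_left _ h2
          · exact Finset.mem_union_right _ (by exact_mod_cast hxB)
        calc t.card ≤ (A2 ∪ B1).card := Finset.card_le_card hsub
          _ = A2.card + B1.card := Finset.card_union_of_disjoint hd2B
          _ ≤ A1.card + A2.card := by omega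
      · push_neg at hint
        have hsub : t ⊆ A1 ∪ A2 := by
          intro x hx
          have hxU := ht (by exact_mod_cast hx)
          rcases hxU with hxS | hxB
          · exact_mod_cast hxS
          · exact absurd (by exact_mod_cast hxB) (hint x hx)
        calc t.card ≤ (A1 ∪ A2).card := Finset.card_le_card hsub
          _ = A1.card + A2.card := hcardU
    -- lower bound on the new clique number
    have hlow : A1.card + A2.card ≤
        cliqueNumOn (G.deleteEdges {s(a2, b0)}) (↑(A1 ∪ A2) ∪ ↑B1) := by
      rw [← hcardU]
      apply le_cliqueNumOn
      · exact Set.subset_union_left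
      · intro x hx y hy hxy
        rw [SimpleGraph.deleteEdges_adj]
        constructor
        · exact hcliq12 (by rwa [← Finset.coe_union]) (by rwa [← Finset.coe_union]) hxy
        · intro hmem
          rw [Set.mem_singleton_iff] at hmem
          rcases Sym2.eq_iff.mp hmem with ⟨-, hyb⟩ | ⟨hxb, -⟩
          · exact hb0A (by exact_mod_cast hA12A (hyb ▸ hy))
          · exact hb0A (by exact_mod_cast hA12A (hxb ▸ hx))
    omega

set_option maxHeartbeats 1000000 in
open scoped Classical in
/-- Existence of a good class choice (on one side or the other) for a nonskeletal
linear homogeneous pair. -/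
lemma stmt18_exists (G : SimpleGraph V) (A B : Finset V)
    (hpair : IsHomPair G A B) (hlin : IsLinearPair G A B)
    (hns : ¬IsSkeletalPair G A B) :
    (∃ b0 ∈ B, (nbIn G A b0).Nonempty ∧ (A \ nbIn G A b0).Nonempty ∧
        (cls G A B b0).card ≤ (topCl G A B b0).card) ∨
    (∃ a0 ∈ A, (nbIn G B a0).Nonempty ∧ (B \ nbIn G B a0).Nonempty ∧
        (cls G B A a0).card ≤ (topCl G B A a0).card) := by
  by_contra hcon
  push_neg at hcon
  obtain ⟨F1, F2⟩ := hcon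
  obtain ⟨-, -, hcliqA, hcliqB, hAne, hBne, hdisj, -, -⟩ := id hpair
  simp only [IsSkeletalPair] at hns
  push_neg at hns
  obtain ⟨as, has, bs, hbs, hadj, hge⟩ := hns
  have hchB := chain_of_linear hlin
  have hchA := chain_of_linear (linear_symm hlin)
  -- Key: if some vertex of B has a nonempty, non-full neighbourhood in A,
  -- then everything outside that neighbourhood has no neighbours in B.
  have key : ∀ b0 ∈ B, (nbIn G A b0).Nonempty → ∀ a ∈ A \ nbIn G A b0,
      nbIn G B a = ∅ := by
    intro b0 hb0 hNne a ha
    by_contra hane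
    have haone : (nbIn G B a).Nonempty := Finset.nonempty_iff_ne_empty.mpr hane
    have hA1ne : (A \ nbIn G A b0).Nonempty := ⟨a, ha⟩
    obtain ⟨a0, ha0, hmax⟩ := exists_top (nbIn G B) hA1ne
      (fun x hx y hy => hchA x (Finset.mem_sdiff.mp hx).1 y (Finset.mem_sdiff.mp hy).1)
    have ha0A : a0 ∈ A := (Finset.mem_sdiff.mp ha0).1
    have ha0N : a0 ∉ nbIn G A b0 := (Finset.mem_sdiff.mp ha0).2
    have ha0ne : (nbIn G B a0).Nonempty := by
      obtain ⟨b, hb⟩ := haone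
      exact ⟨b, hmax a ha hb⟩
    have hb0mem : b0 ∈ B \ nbIn G B a0 := by
      refine Finset.mem_sdiff.mpr ⟨hb0, fun hmem => ?_⟩
      exact ha0N (mem_nbIn.mpr ⟨ha0A, (mem_nbIn.mp hmem).2.symm⟩)
    have hsubN : ∀ b' ∈ B \ nbIn G B a0, nbIn G A b' ⊆ nbIn G A b0 := by
      intro b' hb'
      by_contra hno
      obtain ⟨a1, ha1m, ha1n⟩ := Finset.not_subset.mp hno
      have ha1A : a1 ∈ A := (mem_nbIn.mp ha1m).1
      have hb'm : b' ∈ nbIn G B a1 :=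
        mem_nbIn.mpr ⟨(Finset.mem_sdiff.mp hb').1, (mem_nbIn.mp ha1m).2.symm⟩
      exact (Finset.mem_sdiff.mp hb').2
        (hmax a1 (Finset.mem_sdiff.mpr ⟨ha1A, ha1n⟩) hb'm)
    have htopeq : topCl G B A a0 = cls G A B b0 := by
      ext b
      rw [mem_topCl, mem_cls]
      constructor
      · rintro ⟨hb, hmax'⟩
        exact ⟨(Finset.mem_sdiff.mp hb).1,
          Finset.Subset.antisymm (hsubN b hb) (hmax' b0 hb0mem)⟩
      · rintro ⟨hbB, hbeq⟩
        have hbm : b ∈ B \ nbIn G B a0 := by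
          refine Finset.mem_sdiff.mpr ⟨hbB, fun hmem => ?_⟩
          exact ha0N (hbeq ▸ mem_nbIn.mpr ⟨ha0A, (mem_nbIn.mp hmem).2.symm⟩)
        exact ⟨hbm, fun b' hb' => hbeq.symm ▸ hsubN b' hb'⟩
    have hclseq : cls G B A a0 = topCl G A B b0 := by
      ext x
      rw [mem_cls, mem_topCl]
      constructor
      · rintro ⟨hxA, hxeq⟩
        have hxN : x ∉ nbIn G A b0 := by
          intro hmem
          have hbx : b0 ∈ nbIn G B x := mem_nbIn.mpr ⟨hb0, (mem_nbIn.mp hmem).2.symm⟩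
          rw [hxeq] at hbx
          exact (Finset.mem_sdiff.mp hb0mem).2 hbx
        exact ⟨Finset.mem_sdiff.mpr ⟨hxA, hxN⟩, fun a' ha' => hxeq.symm ▸ hmax a' ha'⟩
      · rintro ⟨hx, hmax'⟩
        exact ⟨(Finset.mem_sdiff.mp hx).1,
          Finset.Subset.antisymm (hmax x hx) (hmax' a0 ha0)⟩
    have h1 := F1 b0 hb0 hNne hA1ne
    have h2 := F2 a0 ha0A ha0ne ⟨b0, hb0mem⟩
    rw [htopeq, hclseq] at h2
    omega
  -- The bipartite graph is a complete split
  have hsplit : ∀ b ∈ B, (nbIn G A b).Nonempty → nbIn G A b = nbIn G A bs := by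
    intro b hb hbne
    rcases hchB b hb bs hbs with h | h
    · refine Finset.Subset.antisymm h ?_
      intro a1 ha1
      by_contra ha1n
      have h0 := key b hb hbne a1 (Finset.mem_sdiff.mpr ⟨(mem_nbIn.mp ha1).1, ha1n⟩)
      have hm : bs ∈ nbIn G B a1 := mem_nbIn.mpr ⟨hbs, (mem_nbIn.mp ha1).2.symm⟩
      rw [h0] at hm
      exact absurd hm (Finset.notMem_empty bs)
    · refine Finset.Subset.antisymm ?_ h
      intro a1 ha1
      by_contra ha1n
      have h0 := key bs hbs ⟨as, mem_nbIn.mpr ⟨has, hadj.symm⟩⟩ a1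
        (Finset.mem_sdiff.mpr ⟨(mem_nbIn.mp ha1).1, ha1n⟩)
      have hm : b ∈ nbIn G B a1 := mem_nbIn.mpr ⟨hb, (mem_nbIn.mp ha1).2.symm⟩
      rw [h0] at hm
      exact absurd hm (Finset.notMem_empty b)
  set N := nbIn G A bs with hNdef
  set B' := B.filter (fun b => (nbIn G A b).Nonempty) with hB'def
  have hNA : N ⊆ A := fun x hx => (mem_nbIn.mp hx).1
  have hB'B : B' ⊆ B := Finset.filter_subset _ _
  have hasN : as ∈ N := mem_nbIn.mpr ⟨has, hadj.symm⟩
  have hbsB' : bs ∈ B' := Finset.mem_filter.mpr ⟨hbs, ⟨as, hasN⟩⟩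
  have hB'N : ∀ b ∈ B', nbIn G A b = N :=
    fun b hb => hsplit b (Finset.mem_filter.mp hb).1 (Finset.mem_filter.mp hb).2
  have hB0 : ∀ b ∈ B, b ∉ B' → nbIn G A b = ∅ := by
    intro b hb hb'
    by_contra hne
    exact hb' (Finset.mem_filter.mpr ⟨hb, Finset.nonempty_iff_ne_empty.mpr hne⟩)
  have hAN0 : ∀ a ∈ A \ N, nbIn G B a = ∅ := key bs hbs ⟨as, hasN⟩
  have hNB : ∀ a ∈ N, nbIn G B a = B' := by
    intro a haN
    ext b
    rw [mem_nbIn]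
    constructor
    · rintro ⟨hbB, hab⟩
      exact Finset.mem_filter.mpr ⟨hbB, ⟨a, mem_nbIn.mpr ⟨hNA haN, hab.symm⟩⟩⟩
    · intro hb
      refine ⟨hB'B hb, ?_⟩
      have hm : a ∈ nbIn G A b := by rw [hB'N b hb]; exact haN
      exact (mem_nbIn.mp hm).2.symm
  -- first inequality
  have h1 : (A \ N).card < B'.card := by
    by_cases hAN : (A \ N).Nonempty
    · have hF := F1 bs hbs ⟨as, hasN⟩ hAN
      have e1 : topCl G A B bs = A \ N := by
        ext x
        rw [mem_topCl]
        constructor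
        · exact fun h => h.1
        · intro h
          refine ⟨h, fun a' ha' => ?_⟩
          rw [hAN0 a' ha', hAN0 x h]
      have e2 : cls G A B bs = B' := by
        ext b
        rw [mem_cls]
        constructor
        · rintro ⟨hbB, hbeq⟩
          refine Finset.mem_filter.mpr ⟨hbB, ?_⟩
          rw [hbeq]
          exact ⟨as, hasN⟩
        · intro hb
          exact ⟨hB'B hb, hB'N b hb⟩
      rw [e1, e2] at hF
      exact hF
    · have he : A \ N = ∅ := Finset.not_nonempty_iff_eq_empty.mp hAN
      rw [he, Finset.card_empty]
      exact Finset.card_pos.mpr ⟨bs, hbsB'⟩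
  -- second inequality
  have h2 : (B \ B').card < N.card := by
    have hasB' : nbIn G B as = B' := hNB as hasN
    by_cases hBB : (B \ B').Nonempty
    · have hF := F2 as has (by rw [hasB']; exact ⟨bs, hbsB'⟩)
        (by rw [hasB']; exact hBB)
      have e1 : topCl G B A as = B \ B' := by
        ext b
        rw [mem_topCl]
        constructor
        · intro h
          have hb := h.1
          rwa [hasB'] at hb
        · intro h
          have hb : b ∈ B \ nbIn G B as := by rw [hasB']; exact h
          refine ⟨hb, fun b' hb' => ?_⟩
          rw [hasB'] at hb'
          rw [hB0 b' (Finset.mem_sdiff.mp hb').1 (Finset.mem_sdiff.mp hb').2,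
            hB0 b (Finset.mem_sdiff.mp h).1 (Finset.mem_sdiff.mp h).2]
      have e2 : cls G B A as = N := by
        ext x
        rw [mem_cls]
        constructor
        · rintro ⟨hxA, hxeq⟩
          rw [hasB'] at hxeq
          by_contra hxN
          have h0 := hAN0 x (Finset.mem_sdiff.mpr ⟨hxA, hxN⟩)
          rw [h0] at hxeq
          exact absurd (hxeq ▸ hbsB') (Finset.notMem_empty bs)
        · intro hxN
          exact ⟨hNA hxN, by rw [hNB x hxN, hasB']⟩
      rw [e1, e2] at hF
      exact hF
    · have he : B \ B' = ∅ := Finset.not_nonempty_iff_eq_empty.mp hBB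
      rw [he, Finset.card_empty]
      exact Finset.card_pos.mpr ⟨as, hasN⟩
  -- N ∪ B' is a clique
  have hdisjNB : Disjoint N B' := Finset.disjoint_left.mpr
    (fun {x} hx hx2 => Finset.disjoint_left.mp hdisj (hNA hx) (hB'B hx2))
  have hcliqNB : G.IsClique (↑(N ∪ B') : Set V) := by
    rw [Finset.coe_union]
    intro x hx y hy hxy
    rcases hx with hx | hx <;> rcases hy with hy | hy
    · exact hcliqA (by exact_mod_cast hNA (by exact_mod_cast hx))
        (by exact_mod_cast hNA (by exact_mod_cast hy)) hxy
    · have hx' : x ∈ N := by exact_mod_cast hx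
      have hy' : y ∈ B' := by exact_mod_cast hy
      have hm : x ∈ nbIn G A y := by rw [hB'N y hy']; exact hx'
      exact (mem_nbIn.mp hm).2.symm
    · have hx' : x ∈ B' := by exact_mod_cast hx
      have hy' : y ∈ N := by exact_mod_cast hy
      have hm : y ∈ nbIn G A x := by rw [hB'N x hx']; exact hy'
      exact (mem_nbIn.mp hm).2
    · exact hcliqB (by exact_mod_cast hB'B (by exact_mod_cast hx))
        (by exact_mod_cast hB'B (by exact_mod_cast hy)) hxy
  have hlow : N.card + B'.card ≤ cliqueNumOn G (↑A ∪ ↑B) := by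
    have hll := le_cliqueNumOn (S := (↑A ∪ ↑B : Set V)) (N ∪ B') (by
      intro x hx
      rcases Finset.mem_union.mp (by exact_mod_cast hx) with h | h
      · exact Set.mem_union_left _ (by exact_mod_cast hNA h)
      · exact Set.mem_union_right _ (by exact_mod_cast hB'B h)) hcliqNB
    rwa [Finset.card_union_of_disjoint hdisjNB] at hll
  have hupp : cliqueNumOn (G.deleteEdges {s(as, bs)}) (↑A ∪ ↑B) ≤ N.card + B'.card - 1 := by
    apply cliqueNumOn_le
    intro t ht hcliqt
    have htG : G.IsClique (↑t : Set V) := hcliqt.mono (G.deleteEdges_le _)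
    by_cases htB : ∃ b ∈ t, b ∈ B
    · by_cases htA : ∃ a ∈ t, a ∈ A
      · obtain ⟨b1, hb1t, hb1B⟩ := htB
        obtain ⟨a1, ha1t, ha1A⟩ := htA
        have hsubNB : t ⊆ N ∪ B' := by
          intro x hx
          rcases ht (by exact_mod_cast hx) with hxA | hxB
          · have hxA' : x ∈ A := by exact_mod_cast hxA
            have hxb1 : x ≠ b1 := fun he => Finset.disjoint_left.mp hdisj hxA' (he ▸ hb1B)
            have hadj1 : G.Adj b1 x :=
              (htG (by exact_mod_cast hx) (by exact_mod_cast hb1t) hxb1).symm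
            have hxm : x ∈ nbIn G A b1 := mem_nbIn.mpr ⟨hxA', hadj1⟩
            have hb1B' : b1 ∈ B' := Finset.mem_filter.mpr ⟨hb1B, ⟨x, hxm⟩⟩
            refine Finset.mem_union_left _ ?_
            rw [← hB'N b1 hb1B']
            exact hxm
          · have hxB' : x ∈ B := by exact_mod_cast hxB
            have hxa1 : x ≠ a1 := fun he =>
              Finset.disjoint_left.mp hdisj ha1A (he ▸ hxB')
            have hadj1 : G.Adj a1 x :=
              (htG (by exact_mod_cast hx) (by exact_mod_cast ha1t) hxa1).symm
            exact Finset.mem_union_right _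
              (Finset.mem_filter.mpr ⟨hxB', ⟨a1, mem_nbIn.mpr ⟨ha1A, hadj1.symm⟩⟩⟩)
        have hnotboth : as ∉ t ∨ bs ∉ t := by
          by_contra hcon2
          push_neg at hcon2
          have hadjd := hcliqt (by exact_mod_cast hcon2.1) (by exact_mod_cast hcon2.2) hadj.ne
          rw [SimpleGraph.deleteEdges_adj] at hadjd
          exact hadjd.2 rfl
        have hccard : (N ∪ B').card = N.card + B'.card :=
          Finset.card_union_of_disjoint hdisjNB
        rcases hnotboth with h | h
        · have hsub2 : t ⊆ (N ∪ B').erase as := fun x hx =>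
            Finset.mem_erase.mpr ⟨fun he => h (he ▸ hx), hsubNB hx⟩
          have hcc := Finset.card_le_card hsub2
          rw [Finset.card_erase_of_mem (Finset.mem_union_left _ hasN), hccard] at hcc
          exact hcc
        · have hsub2 : t ⊆ (N ∪ B').erase bs := fun x hx =>
            Finset.mem_erase.mpr ⟨fun he => h (he ▸ hx), hsubNB hx⟩
          have hcc := Finset.card_le_card hsub2
          rw [Finset.card_erase_of_mem (Finset.mem_union_right _ hbsB'), hccard] at hcc
          exact hcc
      · push_neg at htA
        have hsub : t ⊆ B := by
          intro x hx
          rcases ht (by exact_mod_cast hx) with hxA | hxB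
          · exact absurd (by exact_mod_cast hxA) (htA x hx)
          · exact_mod_cast hxB
        have hcb := Finset.card_le_card hsub
        have hBeq : (B \ B').card + B'.card = B.card :=
          Finset.card_sdiff_add_card_eq_card hB'B
        have hN1 : 1 ≤ N.card := Finset.card_pos.mpr ⟨as, hasN⟩
        omega
    · push_neg at htB
      have hsub : t ⊆ A := by
        intro x hx
        rcases ht (by exact_mod_cast hx) with hxA | hxB
        · exact_mod_cast hxA
        · exact absurd (by exact_mod_cast hxB) (htB x hx)
      have hcb := Finset.card_le_card hsub
      have hAeq : (A \ N).card + N.card = A.card :=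
        Finset.card_sdiff_add_card_eq_card hNA
      have hB1' : 1 ≤ B'.card := Finset.card_pos.mpr ⟨bs, hbsB'⟩
      omega
  have hN1 : 1 ≤ N.card := Finset.card_pos.mpr ⟨as, hasN⟩
  omega

end Stmt18Aux
theorem stmt18 {V : Type*} [Fintype V] [DecidableEq V] (G : SimpleGraph V) (A B : Finset V)
    (hpair : IsHomPair G A B) (hlin : IsLinearPair G A B) (hns : ¬IsSkeletalPair G A B) :
    ∃ A1 A2 B1 : Finset V, A1.Nonempty ∧ A2.Nonempty ∧ B1.Nonempty ∧
      Disjoint A1 A2 ∧ Disjoint A1 B1 ∧ Disjoint A2 B1 ∧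
      B1.card ≤ A1.card ∧
      (A1.card = 1 ∨ IsHomogeneousClique G A1) ∧
      (A2.card = 1 ∨ IsHomogeneousClique G A2) ∧
      (B1.card = 1 ∨ IsHomogeneousClique G B1) ∧
      G.IsClique (↑A1 ∪ ↑A2 : Set V) ∧ G.IsClique (↑A2 ∪ ↑B1 : Set V) ∧
      (∀ a ∈ A1, ∀ b ∈ B1, ¬G.Adj a b) ∧
      IsHomPair G (A1 ∪ A2) B1 ∧
      IsLinearPair G (A1 ∪ A2) B1 ∧
      ¬IsSkeletalPair G (A1 ∪ A2) B1 := by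
  rcases stmt18_exists G A B hpair hlin hns with ⟨b0, hb0, hx1, hx2, hx3⟩ |
    ⟨a0, ha0, hx1, hx2, hx3⟩
  · exact stmt18_construct G A B hpair hlin b0 hb0 hx1 hx2 hx3
  · exact stmt18_construct G B A (homPair_symm hpair) (linear_symm hlin) a0 ha0 hx1 hx2 hx3

end Paper
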